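/- arXiv:2407.09866 — 5 statements merged into one kernel-verified Lean document; each statement's English description precedes it below -/
import Mathlib

section
/- For every array u : Fin n → Fin n → ℂ, the complex number ∑_{i,j,k,l} R i j k l · u i k · conj (u j l) has zero imaginary part and nonnegative real part. (This is the algebraic content of the paper's Corollary: the Riemann tensor of a special Kähler geometry, given by R_{i j̄ k l̄} = G^{m n̄} Y_{ikm} conj(Y_{jln}), is Nakano non-negative.) -/
/-!
Regard `R` as a matrix indexed by pairs, `(i, k), (j, l) ↦ R i j k l`. It is then the congruence
`X * G⁻¹ * Xᴴ` of the positive definite `G⁻¹` by the matrix `X (i, k) m = Y i k m`, so it is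
positive semidefinite, and the Nakano form is its Hermitian form at `u` read as a vector on pairs.
-/

section

open Finset Matrix ComplexOrder

theorem Fintype.sum_sum_sum_sum_eq_sum_prod_sum_prod {ι κ α : Type*} [Fintype ι] [Fintype κ]
    [AddCommMonoid α] (f : ι → ι → κ → κ → α) :
    ∑ i, ∑ j, ∑ k, ∑ l, f i j k l = ∑ a : ι × κ, ∑ b : ι × κ, f a.1 b.1 a.2 b.2 := by
  simp only [Fintype.sum_prod_type]
  exact Finset.sum_congr rfl fun i _ => sum_comm

theorem Matrix.mul_mul_conjTranspose_apply {κ ι α : Type*} [Fintype ι] [CommSemiring α]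
    [StarRing α] (X : Matrix κ ι α) (A : Matrix ι ι α) (a b : κ) :
    (X * A * Xᴴ) a b = ∑ m, ∑ p, A m p * X a m * star (X b p) := by
  simp only [mul_apply, conjTranspose_apply, sum_mul]
  rw [sum_comm]
  exact sum_congr rfl fun m _ => sum_congr rfl fun p _ => by ring

theorem Matrix.PosSemidef.sum_mul_mul_star_nonneg {κ 𝕜 : Type*} [Fintype κ] [RCLike 𝕜]
    {M : Matrix κ κ 𝕜} (hM : M.PosSemidef) (u : κ → 𝕜) :
    0 ≤ ∑ a, ∑ b, M a b * u a * star (u b) := by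
  convert hM.dotProduct_mulVec_nonneg (star u) using 1
  simp only [dotProduct, mulVec, Pi.star_apply, star_star, mul_sum]
  exact sum_congr rfl fun a _ => sum_congr rfl fun b _ => by ring

end

open Finset ComplexOrder in
theorem special_kahler_nakano_nonneg_general
    (n : ℕ)
    (G : Matrix (Fin n) (Fin n) ℂ) (hG : G.PosDef)
    (Y : Fin n → Fin n → Fin n → ℂ)
    (R : Fin n → Fin n → Fin n → Fin n → ℂ)
    (hR : ∀ i j k l, R i j k l =
      ∑ m, ∑ p, G⁻¹ m p * Y i k m * (starRingEnd ℂ) (Y j l p))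
    (u : Fin n → Fin n → ℂ) :
    (∑ i, ∑ j, ∑ k, ∑ l,
        R i j k l * u i k * (starRingEnd ℂ) (u j l)).im = 0 ∧
    0 ≤ (∑ i, ∑ j, ∑ k, ∑ l,
        R i j k l * u i k * (starRingEnd ℂ) (u j l)).re := by
  set X : Matrix (Fin n × Fin n) (Fin n) ℂ := Matrix.of fun a m => Y a.1 a.2 m
  have hform : ∑ i, ∑ j, ∑ k, ∑ l, R i j k l * u i k * (starRingEnd ℂ) (u j l) =
      ∑ a, ∑ b, (X * G⁻¹ * X.conjTranspose) a b * u a.1 a.2 * star (u b.1 b.2) := by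
    rw [Fintype.sum_sum_sum_sum_eq_sum_prod_sum_prod
      (fun i j k l => R i j k l * u i k * (starRingEnd ℂ) (u j l))]
    simp only [Matrix.mul_mul_conjTranspose_apply, hR, X, Matrix.of_apply, RCLike.star_def]
  have hnonneg := (hG.inv.posSemidef.mul_mul_conjTranspose_same X).sum_mul_mul_star_nonneg
    fun a => u a.1 a.2
  rw [← hform, Complex.nonneg_iff] at hnonneg
  exact ⟨hnonneg.2.symm, hnonneg.1⟩

open Finset ComplexOrder in
/-- Nakano non-negativity of the special Kähler curvature
`R i j k l = ∑ m p, (G⁻¹) m p * Y i k m * conj (Y j l p)`. -/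
theorem special_kahler_nakano_nonneg
    (n : ℕ) (hn : 0 < n)
    (G : Matrix (Fin n) (Fin n) ℂ) (hG : G.PosDef)
    (Y : Fin n → Fin n → Fin n → ℂ)
    (hYsym : ∀ i j k, Y i j k = Y j i k ∧ Y i j k = Y i k j)
    (R : Fin n → Fin n → Fin n → Fin n → ℂ)
    (hR : ∀ i j k l, R i j k l =
      ∑ m, ∑ p, G⁻¹ m p * Y i k m * (starRingEnd ℂ) (Y j l p))
    (u : Fin n → Fin n → ℂ) :
    (∑ i, ∑ j, ∑ k, ∑ l,
        R i j k l * u i k * (starRingEnd ℂ) (u j l)).im = 0 ∧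
    0 ≤ (∑ i, ∑ j, ∑ k, ∑ l,
        R i j k l * u i k * (starRingEnd ℂ) (u j l)).re :=
  special_kahler_nakano_nonneg_general n G hG Y R hR u
end

section
/- For all vectors v, w : Fin n → ℂ, the complex number ∑_{i,j,k,l} R i j k l · v i · conj (v j) · w k · conj (w l) has zero imaginary part and nonnegative real part. (Griffiths non-negativity / non-negative holomorphic bisectional curvatures of special Kähler geometry, as asserted in the paper's Corollary on the curvature tensor.) -/
/-!
With `a m = ∑ i k, Y i k m * v i * w k` (the contraction `Y(v, w)`), the bisectional curvature
form collapses to `∑ m p, G⁻¹ m p * a m * conj (a p)`, a value of the Hermitian form of `G⁻¹`.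
Since `G⁻¹` is positive definite, this is a nonnegative real number.
-/

open Finset Matrix

section Contraction

variable {ι κ S : Type*} [Fintype ι] [Fintype κ] [CommRing S] [StarRing S]

def tensorContract (Y : ι → ι → κ → S) (v w : ι → S) : κ → S :=
  fun m => ∑ i, ∑ k, Y i k m * v i * w k

theorem sum_mul_star_eq_tensorContract_dotProduct (A : Matrix κ κ S) (Y : ι → ι → κ → S)
    (v w : ι → S) :
    ∑ i, ∑ j, ∑ k, ∑ l,
        (∑ m, ∑ p, A m p * Y i k m * star (Y j l p)) * v i * star (v j) * w k * star (w l) =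
      tensorContract Y v w ⬝ᵥ (A *ᵥ star (tensorContract Y v w)) := by
  have hsum : tensorContract Y v w = ∑ i, ∑ k, fun m => Y i k m * v i * w k := by
    ext m
    simp only [tensorContract, Finset.sum_apply]
  simp only [hsum, star_sum, sum_dotProduct]
  simp only [dotProduct_sum, mulVec_sum]
  refine sum_congr rfl fun i _ => ?_
  rw [sum_comm]
  refine sum_congr rfl fun k _ => sum_congr rfl fun j _ => sum_congr rfl fun l _ => ?_
  simp only [dotProduct, mulVec, Pi.star_apply, star_mul, sum_mul, mul_sum]
  refine sum_congr rfl fun m _ => sum_congr rfl fun p _ => ?_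
  ring

end Contraction

open Finset ComplexOrder in
theorem special_kahler_griffiths_nonneg_general
    (n : ℕ)
    (G : Matrix (Fin n) (Fin n) ℂ) (hG : G.PosDef)
    (Y : Fin n → Fin n → Fin n → ℂ)
    (R : Fin n → Fin n → Fin n → Fin n → ℂ)
    (hR : ∀ i j k l, R i j k l =
      ∑ m, ∑ p, G⁻¹ m p * Y i k m * (starRingEnd ℂ) (Y j l p))
    (v w : Fin n → ℂ) :
    (∑ i, ∑ j, ∑ k, ∑ l,
        R i j k l * v i * (starRingEnd ℂ) (v j) * w k * (starRingEnd ℂ) (w l)).im = 0 ∧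
    0 ≤ (∑ i, ∑ j, ∑ k, ∑ l,
        R i j k l * v i * (starRingEnd ℂ) (v j) * w k * (starRingEnd ℂ) (w l)).re := by
  have hnonneg : 0 ≤ ∑ i, ∑ j, ∑ k, ∑ l,
      R i j k l * v i * (starRingEnd ℂ) (v j) * w k * (starRingEnd ℂ) (w l) := by
    simp only [hR, starRingEnd_apply, sum_mul_star_eq_tensorContract_dotProduct]
    simpa using hG.inv.posSemidef.dotProduct_mulVec_nonneg (star (tensorContract Y v w))
  obtain ⟨hre, him⟩ := Complex.nonneg_iff.mp hnonneg
  exact ⟨him.symm, hre⟩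

open Finset ComplexOrder in
/-- Griffiths non-negativity / non-negative holomorphic bisectional curvature of the
special Kähler curvature `R i j k l = ∑ m p, (G⁻¹) m p * Y i k m * conj (Y j l p)`. -/
theorem special_kahler_griffiths_nonneg
    (n : ℕ) (hn : 0 < n)
    (G : Matrix (Fin n) (Fin n) ℂ) (hG : G.PosDef)
    (Y : Fin n → Fin n → Fin n → ℂ)
    (hYsym : ∀ i j k, Y i j k = Y j i k ∧ Y i j k = Y i k j)
    (R : Fin n → Fin n → Fin n → Fin n → ℂ)
    (hR : ∀ i j k l, R i j k l =
      ∑ m, ∑ p, G⁻¹ m p * Y i k m * (starRingEnd ℂ) (Y j l p))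
    (v w : Fin n → ℂ) :
    (∑ i, ∑ j, ∑ k, ∑ l,
        R i j k l * v i * (starRingEnd ℂ) (v j) * w k * (starRingEnd ℂ) (w l)).im = 0 ∧
    0 ≤ (∑ i, ∑ j, ∑ k, ∑ l,
        R i j k l * v i * (starRingEnd ℂ) (v j) * w k * (starRingEnd ℂ) (w l)).re :=
  special_kahler_griffiths_nonneg_general n G hG Y R hR v w
end

section
/- The Ricci matrix Ric, defined by Ric i j := ∑_{k,l} (G⁻¹) k l · R i j k l, is a Hermitian positive semidefinite n×n complex matrix; moreover Ric = 0 if and only if Y is identically zero, if and only if the full array R is identically zero. (This is the paper's statement that the Ricci tensor of a special Kähler geometry is non-negative, and that a Ricci-flat special Kähler manifold is flat.) -/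
/-!
Flatten `Y` into the matrices `A i (k, m) = Y i k m` and `B (i, k) m = Y i k m`. Then
`Ric = A (G⁻¹ ⊗ G⁻¹) Aᴴ` and `R (i, k) (j, l) = (B G⁻¹ Bᴴ) (i, k) (j, l)`, with `G⁻¹` and
`G⁻¹ ⊗ G⁻¹` positive definite. A congruence `X M Xᴴ` by a positive definite `M` is positive
semidefinite, and vanishes only if `X = 0`, since its diagonal entries are the values
`star x ⬝ᵥ M x` at the rows of `X`.
-/

open Finset Matrix
open scoped Kronecker ComplexOrder

theorem Matrix.PosDef.mul_mul_conjTranspose_eq_zero_iff {m n 𝕜 : Type*} [Fintype n] [RCLike 𝕜]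
    {M : Matrix n n 𝕜} (hM : M.PosDef) {A : Matrix m n 𝕜} : A * M * Aᴴ = 0 ↔ A = 0 := by
  refine ⟨fun h => ?_, fun h => by simp [h]⟩
  ext i k
  have hrow : star (A i) = 0 := by
    by_contra hne
    refine (hM.dotProduct_mulVec_pos hne).ne' ?_
    rw [Matrix.mul_assoc] at h
    simpa [mul_apply, dotProduct, mulVec] using congrFun (congrFun h i) i
  simpa using congrFun hrow k

section SpecialKahler

variable {ι α : Type*}

def unfoldFirst (Y : ι → ι → ι → α) : Matrix ι (ι × ι) α :=
  of fun i km => Y i km.1 km.2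

def unfoldLast (Y : ι → ι → ι → α) : Matrix (ι × ι) ι α :=
  of fun ik m => Y ik.1 ik.2 m

theorem unfoldFirst_eq_zero_iff [Zero α] {Y : ι → ι → ι → α} :
    unfoldFirst Y = 0 ↔ ∀ i j k, Y i j k = 0 := by
  simp [unfoldFirst, ← Matrix.ext_iff]

theorem unfoldLast_eq_zero_iff [Zero α] {Y : ι → ι → ι → α} :
    unfoldLast Y = 0 ↔ ∀ i j k, Y i j k = 0 := by
  simp [unfoldLast, ← Matrix.ext_iff]

variable [Fintype ι] [CommSemiring α] [StarRing α]

/-- Here `G` stands for the inverse metric `G^{m p̄}`, not the metric itself. -/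
def curvature (G : Matrix ι ι α) (Y : ι → ι → ι → α) (i j k l : ι) : α :=
  ∑ m, ∑ p, G m p * Y i k m * starRingEnd α (Y j l p)

theorem unfoldLast_mul_mul_conjTranspose_apply (G : Matrix ι ι α) (Y : ι → ι → ι → α)
    (i j k l : ι) :
    (unfoldLast Y * G * (unfoldLast Y)ᴴ) (i, k) (j, l) = curvature G Y i j k l := by
  simp only [curvature, unfoldLast, mul_apply, conjTranspose_apply, of_apply, sum_mul,
    starRingEnd_apply, mul_comm (Y _ _ _) (G _ _)]
  exact sum_comm

theorem unfoldFirst_mul_kronecker_mul_conjTranspose_apply (G : Matrix ι ι α)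
    (Y : ι → ι → ι → α) (i j : ι) :
    (unfoldFirst Y * (G ⊗ₖ G) * (unfoldFirst Y)ᴴ) i j =
      ∑ k, ∑ l, G k l * curvature G Y i j k l := by
  rw [Matrix.mul_assoc]
  simp only [curvature, unfoldFirst, mul_apply, conjTranspose_apply, of_apply, kroneckerMap_apply,
    Fintype.sum_prod_type, mul_sum, starRingEnd_apply]
  refine sum_congr rfl fun k _ => ?_
  rw [sum_comm]
  refine sum_congr rfl fun l _ => sum_congr rfl fun m _ => sum_congr rfl fun p _ => ?_
  ring

end SpecialKahler

open Finset ComplexOrder in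
theorem special_kahler_ricci_nonneg_and_flat_general
    (n : ℕ)
    (G : Matrix (Fin n) (Fin n) ℂ) (hG : G.PosDef)
    (Y : Fin n → Fin n → Fin n → ℂ)
    (R : Fin n → Fin n → Fin n → Fin n → ℂ)
    (hR : ∀ i j k l, R i j k l =
      ∑ m, ∑ p, G⁻¹ m p * Y i k m * (starRingEnd ℂ) (Y j l p))
    (Ric : Matrix (Fin n) (Fin n) ℂ)
    (hRic : ∀ i j, Ric i j = ∑ k, ∑ l, G⁻¹ k l * R i j k l) :
    Ric.PosSemidef ∧
    (Ric = 0 ↔ ∀ i j k, Y i j k = 0) ∧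
    ((∀ i j k, Y i j k = 0) ↔ ∀ i j k l, R i j k l = 0) := by
  obtain rfl : R = curvature G⁻¹ Y := funext fun i => funext fun j => funext fun k =>
    funext fun l => hR i j k l
  have hGinv : (G⁻¹).PosDef := hG.inv
  have hRic' : Ric = unfoldFirst Y * (G⁻¹ ⊗ₖ G⁻¹) * (unfoldFirst Y)ᴴ := by
    ext i j
    rw [hRic, unfoldFirst_mul_kronecker_mul_conjTranspose_apply]
  refine ⟨hRic' ▸ (hGinv.kronecker hGinv).posSemidef.mul_mul_conjTranspose_same _, ?_, ?_⟩
  · rw [hRic', (hGinv.kronecker hGinv).mul_mul_conjTranspose_eq_zero_iff,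
      unfoldFirst_eq_zero_iff]
  · rw [← unfoldLast_eq_zero_iff, ← hGinv.mul_mul_conjTranspose_eq_zero_iff]
    simp only [← Matrix.ext_iff, Prod.forall, Matrix.zero_apply,
      unfoldLast_mul_mul_conjTranspose_apply]
    exact ⟨fun h i j k l => h i k j l, fun h i k j l => h i j k l⟩

open Finset ComplexOrder in
/-- The Ricci matrix `Ric i j = ∑ k l, (G⁻¹) k l * R i j k l` of a special Kähler geometry
is Hermitian positive semidefinite, and `Ric = 0` iff `Y ≡ 0` iff `R ≡ 0`. -/
theorem special_kahler_ricci_nonneg_and_flat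
    (n : ℕ) (hn : 0 < n)
    (G : Matrix (Fin n) (Fin n) ℂ) (hG : G.PosDef)
    (Y : Fin n → Fin n → Fin n → ℂ)
    (hYsym : ∀ i j k, Y i j k = Y j i k ∧ Y i j k = Y i k j)
    (R : Fin n → Fin n → Fin n → Fin n → ℂ)
    (hR : ∀ i j k l, R i j k l =
      ∑ m, ∑ p, G⁻¹ m p * Y i k m * (starRingEnd ℂ) (Y j l p))
    (Ric : Matrix (Fin n) (Fin n) ℂ)
    (hRic : ∀ i j, Ric i j = ∑ k, ∑ l, G⁻¹ k l * R i j k l) :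
    Ric.PosSemidef ∧
    (Ric = 0 ↔ ∀ i j k, Y i j k = 0) ∧
    ((∀ i j k, Y i j k = 0) ↔ ∀ i j k l, R i j k l = 0) :=
  special_kahler_ricci_nonneg_and_flat_general n G hG Y R hR Ric hRic
end

section
/- The scalar curvature Rscal := ∑_{i,j,k,l} (G⁻¹) i j · (G⁻¹) k l · R i j k l equals the squared Hermitian norm ‖Y‖²_G := ∑_{i,j,k,l,m,p} Y i k m · conj (Y j l p) · (G⁻¹) i j · (G⁻¹) k l · (G⁻¹) m p; it is a nonnegative real number, and Rscal = 0 if and only if Y is identically zero, in which case the full array R is identically zero. (The paper's Corollary: the scalar curvature of a special Kähler geometry is R = ‖Y‖², and if it vanishes at a point the whole Riemann tensor vanishes there.) -/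
/-!
Write `H = G⁻¹` and view `Y` as a vector indexed by triples. Expanding `R`, the scalar curvature
is the Hermitian form of `(H ⊗ H ⊗ H)ᵀ` evaluated at `Y`. Kronecker products and transposes of
positive definite matrices are positive definite, so this form is a nonnegative real number that
vanishes only at `Y = 0`.
-/

open Finset ComplexConjugate
open scoped ComplexOrder Kronecker Matrix

namespace Matrix

variable {ι : Type*} [Fintype ι]

theorem sum_sum_mul_conj_mul_eq_star_dotProduct_mulVec {R : Type*} [CommRing R] [StarRing R]
    (A : Matrix ι ι R) (v : ι → R) :
    ∑ x, ∑ y, v x * conj (v y) * A x y = star v ⬝ᵥ (Aᵀ *ᵥ v) := by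
  simp only [dotProduct, mulVec, mul_sum, Pi.star_apply, transpose_apply, starRingEnd_apply]
  rw [sum_comm]
  exact sum_congr rfl fun _ _ => sum_congr rfl fun _ _ => by ring

theorem PosDef.star_dotProduct_mulVec_eq_zero_iff {R : Type*} [Ring R] [PartialOrder R]
    [StarRing R] {A : Matrix ι ι R} (hA : A.PosDef) (v : ι → R) :
    star v ⬝ᵥ (A *ᵥ v) = 0 ↔ v = 0 := by
  refine ⟨fun h => by_contra fun hv => (hA.dotProduct_mulVec_pos hv).ne' h, ?_⟩
  rintro rfl
  simp

end Matrix

theorem Fintype.sum_sum_prod_prod {α β γ M : Type*} [Fintype α] [Fintype β] [Fintype γ]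
    [AddCommMonoid M] (f : (α × β) × γ → (α × β) × γ → M) :
    ∑ x, ∑ y, f x y = ∑ i, ∑ j, ∑ k, ∑ l, ∑ m, ∑ p, f ((i, k), m) ((j, l), p) := by
  simp only [Fintype.sum_prod_type]
  refine Finset.sum_congr rfl fun i _ => ?_
  exact (Finset.sum_congr rfl fun k _ => Finset.sum_comm).trans <| Finset.sum_comm.trans <|
    Finset.sum_congr rfl fun j _ => Finset.sum_congr rfl fun k _ => Finset.sum_comm

open Finset ComplexOrder in
theorem special_kahler_scalar_curvature_general
    (n : ℕ)
    (G : Matrix (Fin n) (Fin n) ℂ) (hG : G.PosDef)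
    (Y : Fin n → Fin n → Fin n → ℂ)
    (R : Fin n → Fin n → Fin n → Fin n → ℂ)
    (hR : ∀ i j k l, R i j k l =
      ∑ m, ∑ p, G⁻¹ m p * Y i k m * (starRingEnd ℂ) (Y j l p))
    (Rscal : ℂ)
    (hRscal : Rscal = ∑ i, ∑ j, ∑ k, ∑ l, G⁻¹ i j * G⁻¹ k l * R i j k l) :
    Rscal = (∑ i, ∑ j, ∑ k, ∑ l, ∑ m, ∑ p,
        Y i k m * (starRingEnd ℂ) (Y j l p) * G⁻¹ i j * G⁻¹ k l * G⁻¹ m p) ∧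
    Rscal.im = 0 ∧ 0 ≤ Rscal.re ∧
    ((Rscal = 0 ↔ ∀ i j k, Y i j k = 0) ∧
      ((∀ i j k, Y i j k = 0) → ∀ i j k l, R i j k l = 0)) := by
  have hRscal_eq : Rscal = ∑ i, ∑ j, ∑ k, ∑ l, ∑ m, ∑ p,
      Y i k m * conj (Y j l p) * G⁻¹ i j * G⁻¹ k l * G⁻¹ m p := by
    simp only [hRscal, hR, mul_sum]
    refine sum_congr rfl fun i _ => sum_congr rfl fun j _ => sum_congr rfl fun k _ =>
      sum_congr rfl fun l _ => sum_congr rfl fun m _ => sum_congr rfl fun p _ => by ring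
  set K := G⁻¹ ⊗ₖ G⁻¹ ⊗ₖ G⁻¹
  set y : (Fin n × Fin n) × Fin n → ℂ := fun x => Y x.1.1 x.1.2 x.2
  have hK : (Kᵀ).PosDef := ((hG.inv.kronecker hG.inv).kronecker hG.inv).transpose
  have hRscal_form : Rscal = star y ⬝ᵥ (Kᵀ *ᵥ y) := by
    rw [← Matrix.sum_sum_mul_conj_mul_eq_star_dotProduct_mulVec, Fintype.sum_sum_prod_prod,
      hRscal_eq]
    simp only [K, y, Matrix.kronecker_apply, mul_assoc]
  have hy : y = 0 ↔ ∀ i j k, Y i j k = 0 := by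
    simp [funext_iff, y]
  obtain ⟨hre, him⟩ :=
    Complex.nonneg_iff.mp (hRscal_form ▸ hK.posSemidef.dotProduct_mulVec_nonneg y)
  refine ⟨hRscal_eq, him.symm, hre, ?_, fun hY i j k l => by simp [hR, hY]⟩
  rw [hRscal_form, hK.star_dotProduct_mulVec_eq_zero_iff, hy]

open Finset ComplexOrder in
/-- The scalar curvature `Rscal = ∑ (G⁻¹) i j (G⁻¹) k l R i j k l` of a special Kähler geometry
equals `‖Y‖²_G`, is a nonnegative real number, and vanishes iff `Y ≡ 0`, in which case `R ≡ 0`. -/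
theorem special_kahler_scalar_curvature
    (n : ℕ) (hn : 0 < n)
    (G : Matrix (Fin n) (Fin n) ℂ) (hG : G.PosDef)
    (Y : Fin n → Fin n → Fin n → ℂ)
    (hYsym : ∀ i j k, Y i j k = Y j i k ∧ Y i j k = Y i k j)
    (R : Fin n → Fin n → Fin n → Fin n → ℂ)
    (hR : ∀ i j k l, R i j k l =
      ∑ m, ∑ p, G⁻¹ m p * Y i k m * (starRingEnd ℂ) (Y j l p))
    (Rscal : ℂ)
    (hRscal : Rscal = ∑ i, ∑ j, ∑ k, ∑ l, G⁻¹ i j * G⁻¹ k l * R i j k l) :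
    Rscal = (∑ i, ∑ j, ∑ k, ∑ l, ∑ m, ∑ p,
        Y i k m * (starRingEnd ℂ) (Y j l p) * G⁻¹ i j * G⁻¹ k l * G⁻¹ m p) ∧
    Rscal.im = 0 ∧ 0 ≤ Rscal.re ∧
    ((Rscal = 0 ↔ ∀ i j k, Y i j k = 0) ∧
      ((∀ i j k, Y i j k = 0) → ∀ i j k l, R i j k l = 0)) :=
  special_kahler_scalar_curvature_general n G hG Y R hR Rscal hRscal
end

section
/- For every J with 0 < J < 1/√(2e), the function V_eff(r) = log r + J²/r² has exactly two zeros r₋ < r₊ in the interval (0,1), with 0 < r₋ < √2·J < r₊ < 1, and the sublevel set { r ∈ (0, ∞) : V_eff(r) ≤ 0 } equals the closed interval [r₋, r₊]. (In the paper: geodesics with nonzero angular momentum are confined to the annulus r₋ ≤ r ≤ r₊, never reaching the singularities at r = 0 and r = 1, hence are complete.) -/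
/-!
`V_eff' (r) = (r² - 2J²)/r³`, so `V_eff` decreases on `(0, √2·J]` and increases on `[√2·J, ∞)`.
Its minimum `V_eff(√2·J) = log (√2·J) + 1/2` is negative exactly when `J < 1/√(2e)`, while
`V_eff(J²) ≥ 1` (from `log x ≤ x - 1`) and `V_eff(1) = J²` are positive. The intermediate value
theorem gives one zero on each monotone branch, and strict monotonicity makes the two zeros unique
and the sublevel set `{V_eff ≤ 0}` the interval between them.
-/

open Set Real

section Valley

variable {f : ℝ → ℝ} {l c rm rp r : ℝ}

theorem eq_or_eq_of_strictAntiOn_of_strictMonoOn (hanti : StrictAntiOn f (Ioc l c))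
    (hmono : StrictMonoOn f (Ici c)) (hrm : rm ∈ Ioc l c) (hrp : c ≤ rp)
    (hfrm : f rm = 0) (hfrp : f rp = 0) (hr : l < r) (hfr : f r = 0) : r = rm ∨ r = rp := by
  rcases le_or_gt r c with hrc | hcr
  · exact .inl (hanti.injOn ⟨hr, hrc⟩ hrm (hfr.trans hfrm.symm))
  · exact .inr (hmono.injOn hcr.le hrp (hfr.trans hfrp.symm))

theorem nonpos_iff_mem_Icc_of_strictAntiOn_of_strictMonoOn (hanti : StrictAntiOn f (Ioc l c))
    (hmono : StrictMonoOn f (Ici c)) (hrm : rm ∈ Ioc l c) (hrp : c ≤ rp)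
    (hfrm : f rm = 0) (hfrp : f rp = 0) (hr : l < r) : f r ≤ 0 ↔ r ∈ Icc rm rp := by
  rcases le_or_gt r c with hrc | hcr
  · rw [← hfrm, hanti.le_iff_ge ⟨hr, hrc⟩ hrm]
    exact ⟨fun h ↦ ⟨h, hrc.trans hrp⟩, And.left⟩
  · rw [← hfrp, hmono.le_iff_le hcr.le hrp]
    exact ⟨fun h ↦ ⟨hrm.2.trans hcr.le, h⟩, And.right⟩

theorem setOf_nonpos_eq_Icc_of_strictAntiOn_of_strictMonoOn (hanti : StrictAntiOn f (Ioc l c))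
    (hmono : StrictMonoOn f (Ici c)) (hrm : rm ∈ Ioc l c) (hrp : c ≤ rp)
    (hfrm : f rm = 0) (hfrp : f rp = 0) : {r | l < r ∧ f r ≤ 0} = Icc rm rp := by
  ext r
  refine ⟨fun ⟨hr, hfr⟩ ↦ ?_, fun hr ↦ ?_⟩
  · exact (nonpos_iff_mem_Icc_of_strictAntiOn_of_strictMonoOn hanti hmono hrm hrp hfrm hfrp
      hr).1 hfr
  · have hlr : l < r := hrm.1.trans_le hr.1
    exact ⟨hlr,
      (nonpos_iff_mem_Icc_of_strictAntiOn_of_strictMonoOn hanti hmono hrm hrp hfrm hfrp hlr).2 hr⟩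

end Valley

theorem sq_sqrt_two_mul (J : ℝ) : (√2 * J) ^ 2 = 2 * J ^ 2 := by
  rw [mul_pow, sq_sqrt zero_le_two]

theorem sqrt_two_mul_lt_exp_neg_half {J : ℝ} (hJ : J < 1 / √(2 * exp 1)) :
    √2 * J < exp (-(1 / 2)) := by
  rw [sqrt_mul zero_le_two, ← exp_half, lt_div_iff₀ (by positivity)] at hJ
  rw [exp_neg, ← one_div, lt_div_iff₀ (exp_pos _)]
  linarith

noncomputable def effectivePotential (J r : ℝ) : ℝ := log r + J ^ 2 / r ^ 2

namespace effectivePotential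

variable {J x : ℝ}

theorem hasDerivAt (J : ℝ) (hx : x ≠ 0) :
    HasDerivAt (effectivePotential J) ((x ^ 2 - 2 * J ^ 2) / x ^ 3) x := by
  have h := (hasDerivAt_log hx).add
    ((hasDerivAt_const x (J ^ 2)).div (hasDerivAt_pow 2 x) (pow_ne_zero 2 hx))
  refine h.congr_deriv ?_
  field_simp
  ring

theorem continuousOn_Ioi (J : ℝ) : ContinuousOn (effectivePotential J) (Ioi 0) :=
  fun _ hx ↦ (hasDerivAt J (ne_of_gt hx)).continuousAt.continuousWithinAt

theorem strictAntiOn (J : ℝ) : StrictAntiOn (effectivePotential J) (Ioc 0 (√2 * J)) := by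
  refine strictAntiOn_of_deriv_neg (convex_Ioc _ _)
    ((continuousOn_Ioi J).mono Ioc_subset_Ioi_self) fun x hx ↦ ?_
  rw [interior_Ioc] at hx
  have hx2 : x ^ 2 < 2 * J ^ 2 := by
    rw [← sq_sqrt_two_mul]
    exact pow_lt_pow_left₀ hx.2 hx.1.le two_ne_zero
  rw [(hasDerivAt J hx.1.ne').deriv]
  exact div_neg_of_neg_of_pos (by linarith) (pow_pos hx.1 3)

theorem strictMonoOn (hJ : 0 < J) : StrictMonoOn (effectivePotential J) (Ici (√2 * J)) := by
  have hc : 0 < √2 * J := by positivity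
  refine strictMonoOn_of_deriv_pos (convex_Ici _)
    ((continuousOn_Ioi J).mono fun x hx ↦ hc.trans_le hx) fun x hx ↦ ?_
  rw [interior_Ici] at hx
  have hx0 : 0 < x := hc.trans hx
  have hx2 : 2 * J ^ 2 < x ^ 2 := by
    rw [← sq_sqrt_two_mul]
    exact pow_lt_pow_left₀ hx hc.le two_ne_zero
  rw [(hasDerivAt J hx0.ne').deriv]
  exact div_pos (by linarith) (pow_pos hx0 3)

theorem apply_sqrt_two_mul_neg (hJ0 : 0 < J) (hJ : J < 1 / √(2 * exp 1)) :
    effectivePotential J (√2 * J) < 0 := by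
  have hlog : log (√2 * J) < -(1 / 2) :=
    (log_lt_iff_lt_exp (by positivity)).2 (sqrt_two_mul_lt_exp_neg_half hJ)
  have hfrac : J ^ 2 / (√2 * J) ^ 2 = 1 / 2 := by
    rw [sq_sqrt_two_mul]
    field_simp
  rw [effectivePotential, hfrac]
  linarith

theorem one_le_apply_sq (hJ : J ≠ 0) : 1 ≤ effectivePotential J (J ^ 2) := by
  have hlog := log_le_sub_one_of_pos (inv_pos.2 (by positivity : 0 < J ^ 2))
  have hfrac : J ^ 2 / (J ^ 2) ^ 2 = (J ^ 2)⁻¹ := by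
    field_simp
  rw [log_inv] at hlog
  rw [effectivePotential, hfrac]
  linarith

theorem apply_one (J : ℝ) : effectivePotential J 1 = J ^ 2 := by
  simp [effectivePotential]

end effectivePotential

open Real in
/-- For `0 < J < 1/√(2e)`, the effective potential `V_eff(r) = log r + J²/r²` has exactly
two zeros `r₋ < r₊` in `(0,1)`, with `0 < r₋ < √2·J < r₊ < 1`, and its nonpositivity set
in `(0,∞)` is exactly the closed annulus `[r₋, r₊]`: subcritical geodesics are confined. -/
theorem subcritical_effective_potential_zeros
    (J : ℝ) (hJ0 : 0 < J) (hJc : J < 1 / Real.sqrt (2 * Real.exp 1)) :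
    ∃ rm rp : ℝ,
      0 < rm ∧ rm < Real.sqrt 2 * J ∧ Real.sqrt 2 * J < rp ∧ rp < 1 ∧
      Real.log rm + J ^ 2 / rm ^ 2 = 0 ∧
      Real.log rp + J ^ 2 / rp ^ 2 = 0 ∧
      (∀ r : ℝ, 0 < r → r < 1 → Real.log r + J ^ 2 / r ^ 2 = 0 →
        r = rm ∨ r = rp) ∧
      {r : ℝ | 0 < r ∧ Real.log r + J ^ 2 / r ^ 2 ≤ 0} = Set.Icc rm rp := by
  have hc1 : √2 * J < 1 :=
    (sqrt_two_mul_lt_exp_neg_half hJc).trans (exp_lt_one_iff.2 (by norm_num))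
  have hJ1 : J < 1 := (le_mul_of_one_le_left hJ0.le one_lt_sqrt_two.le).trans_lt hc1
  have hJsq : J ^ 2 < √2 * J := by nlinarith [one_lt_sqrt_two]
  have hcont := effectivePotential.continuousOn_Ioi J
  have hVc := effectivePotential.apply_sqrt_two_mul_neg hJ0 hJc
  have hVJsq := (effectivePotential.one_le_apply_sq hJ0.ne').trans_lt' one_pos
  have hV1 : 0 < effectivePotential J 1 := (effectivePotential.apply_one J).symm ▸ pow_pos hJ0 2
  obtain ⟨rm, ⟨hJrm, hrmc⟩, hrm⟩ := intermediate_value_Ioo' hJsq.le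
    (hcont.mono fun x hx ↦ (pow_pos hJ0 2).trans_le hx.1) ⟨hVc, hVJsq⟩
  obtain ⟨rp, ⟨hcrp, hrp1⟩, hrp⟩ := intermediate_value_Ioo hc1.le
    (hcont.mono fun x hx ↦ (mul_pos (by positivity) hJ0).trans_le hx.1) ⟨hVc, hV1⟩
  have hrm0 : 0 < rm := (pow_pos hJ0 2).trans hJrm
  have hanti := effectivePotential.strictAntiOn J
  have hmono := effectivePotential.strictMonoOn hJ0
  refine ⟨rm, rp, hrm0, hrmc, hcrp, hrp1, hrm, hrp, fun r hr _ hVr ↦ ?_, ?_⟩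
  · exact eq_or_eq_of_strictAntiOn_of_strictMonoOn hanti hmono ⟨hrm0, hrmc.le⟩ hcrp.le hrm hrp
      hr hVr
  · exact setOf_nonpos_eq_Icc_of_strictAntiOn_of_strictMonoOn hanti hmono ⟨hrm0, hrmc.le⟩ hcrp.le
      hrm hrp
end
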